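/- Let x, y ∈ Substr(D) be nonempty strings with slink_D(x) = slink_D(y) = z (so z is a proper suffix of both x and y). If the symbols of x and y immediately preceding their suffix occurrence of z are equal, i.e. x[|x|−|z|] = y[|y|−|z|], then x ≡_D y. (Hence suffix links pointing at a fixed node carry pairwise distinct labels.) -/

import Mathlib

variable {α : Type*}

/-- The set of substrings (contiguous factors, including ε) of patterns in `D`. -/
def Substr (D : Finset (List α)) : Set (List α) := {x | ∃ p ∈ D, x <:+: p}

/-- The set of prefixes (including ε) of patterns in `D`. -/
def Pref (D : Finset (List α)) : Set (List α) := {x | ∃ p ∈ D, x <+: p}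

/-- `ePos D x` : pattern/end-position pairs (1-based end position `j`) at which `x`
occurs in a pattern of `D`, i.e. `x = q[j-|x|+1..j]`. -/
def ePos (D : Finset (List α)) (x : List α) : Set (List α × ℕ) :=
  {qj | qj.1 ∈ D ∧ x.length ≤ qj.2 ∧ qj.2 ≤ qj.1.length ∧
        x = (qj.1.take qj.2).drop (qj.2 - x.length)}

/-- `x ≡_D y` iff `ePos(x,D) = ePos(y,D)`. -/
def eqv (D : Finset (List α)) (x y : List α) : Prop := ePos D x = ePos D y

/-- Suffix link: the longest suffix `y` of `x` with `y ≢_D x` (`x.tails` lists the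
suffixes of `x` in decreasing length order, so `headI` of the filtered list is the
longest suffix that is not `≡_D`-equivalent to `x`). -/
noncomputable def slink (D : Finset (List α)) (x : List α) : List α :=
  letI := Classical.propDecidable
  (x.tails.filter (fun y => decide (¬ eqv D x y))).headI

lemma headI_filter_tails (p : List α → Bool) (x : List α)
    (h : (x.tails.filter p) ≠ []) :
    (x.tails.filter p).headI <:+ x ∧ p ((x.tails.filter p).headI) = true ∧
      ∀ w, w <:+ x → p w = true → w <:+ (x.tails.filter p).headI := by
  induction x with
  | nil =>
    have ht : ([] : List α).tails = [[]] := rfl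
    rw [ht] at h ⊢
    by_cases hp : p [] = true
    · rw [List.filter_cons, if_pos hp]
      exact ⟨List.nil_suffix, hp, fun w hw _ => by
        rw [List.suffix_nil] at hw; simp [hw]⟩
    · exfalso; apply h
      rw [List.filter_cons, if_neg (by simp [hp])]; rfl
  | cons a l ih =>
    rw [List.tails_cons] at h ⊢
    by_cases hp : p (a :: l) = true
    · rw [List.filter_cons, if_pos hp]
      exact ⟨List.suffix_refl _, hp, fun w hw _ => hw⟩
    · rw [List.filter_cons, if_neg (by simp [hp])] at h ⊢
      obtain ⟨h1, h2, h3⟩ := ih h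
      refine ⟨h1.trans (List.suffix_cons a l), h2, ?_⟩
      intro w hw hpw
      rcases List.suffix_cons_iff.mp hw with rfl | hw'
      · exact absurd hpw (by simp [hp])
      · exact h3 w hw' hpw

lemma not_eqv_nil (D : Finset (List α)) (x : List α) (hx : x ∈ Substr D)
    (hx0 : x ≠ []) : ¬ eqv D x [] := by
  obtain ⟨p, hp, -⟩ := hx
  intro h
  have hmem : (p, 0) ∈ ePos D ([] : List α) :=
    ⟨hp, by simp, by simp, by simp⟩
  rw [← h] at hmem
  exact hx0 (List.length_eq_zero_iff.mp (Nat.le_zero.mp hmem.2.1))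

lemma slink_spec (D : Finset (List α)) (x : List α) (hx : x ∈ Substr D)
    (hx0 : x ≠ []) :
    slink D x <:+ x ∧ ¬ eqv D x (slink D x) ∧
      ∀ w, w <:+ x → ¬ eqv D x w → w <:+ slink D x := by
  have hne : (x.tails.filter
      (fun y => @decide (¬ eqv D x y) (Classical.propDecidable _))) ≠ [] := by
    intro hnil
    have hm : ([] : List α) ∈ x.tails.filter
        (fun y => @decide (¬ eqv D x y) (Classical.propDecidable _)) := by
      rw [List.mem_filter]
      exact ⟨(List.mem_tails _ _).mpr List.nil_suffix,
        @decide_eq_true _ (Classical.propDecidable _) (not_eqv_nil D x hx hx0)⟩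
    rw [hnil] at hm
    exact List.not_mem_nil hm
  obtain ⟨h1, h2, h3⟩ := headI_filter_tails _ x hne
  exact ⟨h1, @of_decide_eq_true _ (Classical.propDecidable _) h2,
    fun w hw hnw => h3 w hw (@decide_eq_true _ (Classical.propDecidable _) hnw)⟩

lemma slink_proper (D : Finset (List α)) (x : List α) (hx : x ∈ Substr D)
    (hx0 : x ≠ []) : (slink D x).length < x.length := by
  obtain ⟨h1, h2, -⟩ := slink_spec D x hx hx0
  rcases lt_or_eq_of_le h1.length_le with h | h
  · exact h
  · exact absurd (show eqv D x (slink D x) from by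
      rw [List.IsSuffix.eq_of_length h1 h]; rfl) h2

lemma ext_suffix_eqv (D : Finset (List α)) (u : List α) (hu : u ∈ Substr D)
    (hu0 : u ≠ []) (a : α)
    (ha : u[u.length - (slink D u).length - 1]? = some a) :
    eqv D u (a :: slink D u) := by
  obtain ⟨h1, h2, h3⟩ := slink_spec D u hu hu0
  have hlt := slink_proper D u hu hu0
  set z := slink D u
  set k := u.length - z.length - 1 with hk
  have hk1 : k + 1 = u.length - z.length := by omega
  have hklt : k < u.length := by omega
  have hdrop1 : u.drop (k + 1) = z := by
    obtain ⟨w, hw⟩ := h1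
    have hwl : u.length - z.length = w.length := by rw [← hw]; simp
    rw [hk1, hwl, ← hw, List.drop_left]
  have hget : u[k] = a := by
    rw [List.getElem?_eq_getElem hklt] at ha
    exact Option.some.inj ha
  have hdrop : u.drop k = a :: z := by
    rw [List.drop_eq_getElem_cons hklt, hget, hdrop1]
  have hsuf : (a :: z) <:+ u := hdrop ▸ List.drop_suffix k u
  by_contra hne
  have := (h3 _ hsuf hne).length_le
  simp at this

/-- Let `x, y ∈ Substr D` be nonempty with
`slink D x = slink D y = z`. If the symbols of `x` and `y` immediately preceding
their suffix occurrence of `z` are equal, i.e. `x[|x|-|z|] = y[|y|-|z|]`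
(1-based indexing, so 0-based index `|x|-|z|-1`), then `x ≡_D y`. -/
theorem stmt6 [Fintype α] (D : Finset (List α)) (hD : ∀ p ∈ D, p ≠ [])
    (x y z : List α) (hx : x ∈ Substr D) (hy : y ∈ Substr D)
    (hx0 : x ≠ []) (hy0 : y ≠ [])
    (hzx : slink D x = z) (hzy : slink D y = z)
    (hsym : x[x.length - z.length - 1]? = y[y.length - z.length - 1]?) :
    eqv D x y := by
  subst hzx
  have hltx := slink_proper D x hx hx0
  obtain ⟨a, ha⟩ : ∃ a, x[x.length - (slink D x).length - 1]? = some a :=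
    ⟨_, List.getElem?_eq_getElem (by omega)⟩
  have hb : y[y.length - (slink D y).length - 1]? = some a := by
    rw [hzy, ← hsym]; exact ha
  have e1 := ext_suffix_eqv D x hx hx0 a ha
  have e2 := ext_suffix_eqv D y hy hy0 a hb
  rw [hzy] at e2
  unfold eqv at e1 e2 ⊢
  exact e1.trans e2.symm
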